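/- arXiv:2404.16665 — 2 statements merged into one kernel-verified Lean document; each statement's English description precedes it below -/
import Mathlib

section
/- If y is continuously differentiable on [x_n, x_{n+1}] with h = x_{n+1} - x_n, then for γ ≥ 2, the γ-fold iterated integral of y' over [x_n, x_{n+1}] equals the (γ-1)-fold iterated integral of y over the same interval minus y(x_n)·h^{γ-1}/(γ-1)!. -/
open intervalIntegral

/-- `iterInt a g k x` is the `k`-fold iterated integral of `g` from `a` to `x`. -/
noncomputable def iterInt (a : ℝ) (g : ℝ → ℝ) : ℕ → ℝ → ℝ
  | 0, x => g x
  | (k+1), x => ∫ t in a..x, iterInt a g k t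

/-! The innermost integral of `y'` is `y - y(xₙ)` by the fundamental theorem of calculus; the
remaining `γ - 1` integrations are linear and take the constant `y(xₙ)` to
`y(xₙ) (x - xₙ)^(γ-1) / (γ-1)!`. -/

open Set Nat

theorem iterInt_succ' (a : ℝ) (f : ℝ → ℝ) (k : ℕ) :
    iterInt a f (k + 1) = iterInt a (iterInt a f 1) k := by
  induction k with
  | zero => rfl
  | succ k ih => funext x; exact integral_congr fun t _ => congrFun ih t

theorem iterInt_const (a c : ℝ) (k : ℕ) (x : ℝ) :
    iterInt a (fun _ => c) k x = c * (x - a) ^ k / k ! := by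
  induction k generalizing x with
  | zero => simp [iterInt]
  | succ k ih =>
    simp only [iterInt, ih, integral_div, integral_const_mul, integral_comp_sub_right
      (fun t => t ^ k), sub_self, integral_pow, factorial_succ, cast_mul]
    field_simp
    push_cast
    ring

section

variable {a b : ℝ} {f g : ℝ → ℝ}

theorem continuousOn_iterInt (hf : ContinuousOn f (uIcc a b)) (k : ℕ) :
    ContinuousOn (iterInt a f k) (uIcc a b) := by
  induction k with
  | zero => exact hf
  | succ k ih => exact continuousOn_primitive_interval ih.integrableOn_uIcc

theorem iterInt_congr (hfg : EqOn f g (uIcc a b)) (k : ℕ) :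
    EqOn (iterInt a f k) (iterInt a g k) (uIcc a b) := by
  induction k with
  | zero => exact hfg
  | succ k ih => exact fun x hx => integral_congr (ih.mono (uIcc_subset_uIcc_left hx))

theorem iterInt_sub (hf : ContinuousOn f (uIcc a b)) (hg : ContinuousOn g (uIcc a b)) (k : ℕ) :
    EqOn (iterInt a (fun t => f t - g t) k) (iterInt a f k - iterInt a g k) (uIcc a b) := by
  induction k with
  | zero => exact fun _ _ => rfl
  | succ k ih =>
    intro x hx
    have hsub := uIcc_subset_uIcc_left hx
    exact (integral_congr (ih.mono hsub)).trans <| integral_sub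
      ((continuousOn_iterInt hf k).mono hsub).intervalIntegrable
      ((continuousOn_iterInt hg k).mono hsub).intervalIntegrable

end

/-- If `y` is continuously differentiable on `[xₙ, xₙ₊₁]` with derivative `y'`,
then for `γ ≥ 2` the `γ`-fold iterated integral of `y'` equals the `(γ-1)`-fold
iterated integral of `y` minus `y(xₙ)·h^{γ-1}/(γ-1)!`. -/
theorem iterInt_deriv (xn xnp1 : ℝ) (hle : xn ≤ xnp1) (h : ℝ) (hh : h = xnp1 - xn)
    (y y' : ℝ → ℝ)
    (hy : ∀ x ∈ Set.Icc xn xnp1, HasDerivAt y (y' x) x)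
    (hy' : ContinuousOn y' (Set.Icc xn xnp1))
    (γ : ℕ) (hγ : 2 ≤ γ) :
    iterInt xn y' γ xnp1 =
      iterInt xn y (γ - 1) xnp1 - y xn * h ^ (γ - 1) / (Nat.factorial (γ - 1) : ℝ) := by
  obtain ⟨k, rfl⟩ : ∃ k, γ = k + 1 := ⟨γ - 1, by omega⟩
  rw [← uIcc_of_le hle] at hy hy'
  have hy_cont : ContinuousOn y (uIcc xn xnp1) := fun x hx =>
    (hy x hx).continuousAt.continuousWithinAt
  have hend : xnp1 ∈ uIcc xn xnp1 := right_mem_uIcc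
  have hftc : EqOn (iterInt xn y' 1) (fun t => y t - y xn) (uIcc xn xnp1) := fun x hx =>
    integral_eq_sub_of_hasDerivAt (fun t ht => hy t (uIcc_subset_uIcc_left hx ht))
      (hy'.mono (uIcc_subset_uIcc_left hx)).intervalIntegrable
  calc iterInt xn y' (k + 1) xnp1
      = iterInt xn (iterInt xn y' 1) k xnp1 := by rw [iterInt_succ']
    _ = iterInt xn (fun t => y t - y xn) k xnp1 := iterInt_congr hftc k hend
    _ = iterInt xn y k xnp1 - iterInt xn (fun _ => y xn) k xnp1 :=
      iterInt_sub hy_cont continuousOn_const k hend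
    _ = _ := by rw [iterInt_const, hh, Nat.add_sub_cancel]
end

section
/- The stability function of the nIRK4 method, R(z) = -(z^3 + 12z^2 + 60z + 120)/(z^3 - 12z^2 + 60z - 120), satisfies |R(z)| ≤ 1 for a complex number z = u + iv (with z not a pole of R) if and only if u·(u^4 + v^4 + 2u^2v^2 + 70u^2 + 30v^2 + 600) ≤ 0. -/
/-! The denominator is `-N(-z)` for the numerator `N`, so `R(z) = N(z) / N(-z)` and `|R(z)| ≤ 1`
iff `|N(-z)|² - |N(z)|² ≥ 0`. Splitting `N = E + O` into even part `E = 12z² + 120` and odd part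
`O = z³ + 60z`, this difference is `-4 Re(E·Ō)`, which expands to `-48u(|z|⁴ + 70u² + 30v² + 600)`. -/

open Complex

theorem Complex.norm_le_norm_iff_normSq_le (a b : ℂ) : ‖a‖ ≤ ‖b‖ ↔ normSq a ≤ normSq b := by
  rw [← Complex.sq_norm, ← Complex.sq_norm, sq_le_sq₀ (norm_nonneg a) (norm_nonneg b)]

theorem normSq_nIRK4_num_sub_normSq_den (z : ℂ) :
    normSq (z ^ 3 + 12 * z ^ 2 + 60 * z + 120) - normSq (z ^ 3 - 12 * z ^ 2 + 60 * z - 120) =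
      48 * z.re * (z.re ^ 4 + z.im ^ 4 + 2 * z.re ^ 2 * z.im ^ 2 + 70 * z.re ^ 2 +
        30 * z.im ^ 2 + 600) := by
  simp only [normSq_apply, add_re, add_im, sub_re, sub_im, mul_re, mul_im, pow_succ, pow_zero,
    one_mul, re_ofNat, im_ofNat]
  ring

/-- For the stability function of nIRK4, `|R(z)| ≤ 1` iff
`u·(u⁴ + v⁴ + 2u²v² + 70u² + 30v² + 600) ≤ 0` where `z = u + iv`. -/
theorem nIRK4_stability_characterization (u v : ℝ) (z : ℂ) (hz : z = u + v * I)
    (hden : z ^ 3 - 12 * z ^ 2 + 60 * z - 120 ≠ 0) :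
    ‖(-(z ^ 3 + 12 * z ^ 2 + 60 * z + 120) /
        (z ^ 3 - 12 * z ^ 2 + 60 * z - 120))‖ ≤ 1 ↔
      u * (u ^ 4 + v ^ 4 + 2 * u ^ 2 * v ^ 2 + 70 * u ^ 2 + 30 * v ^ 2 + 600) ≤ 0 := by
  have hre : z.re = u := by simp [hz]
  have him : z.im = v := by simp [hz]
  have hnormSq := normSq_nIRK4_num_sub_normSq_den z
  rw [hre, him] at hnormSq
  rw [norm_div, norm_neg, div_le_one (norm_pos_iff.mpr hden),
    Complex.norm_le_norm_iff_normSq_le, ← sub_nonpos, hnormSq]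
  constructor <;> intro h <;> linarith
end
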